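/- Let g : ℤ³ → ℤ² be the linear map given by the matrix with rows (1, 1, −3) and (−1, −1, −1) (i.e. g(a,b,c) = (a + b − 3c, −a − b − c)). Then the kernel of g is isomorphic as a ℤ-module to ℤ, and the quotient ℤ²/image(g) is isomorphic to ℤ/4. -/
import Mathlib


/-- The linear map `g : ℤ³ → ℤ²`, `g(a, b, c) = (a + b − 3c, −a − b − c)`, has kernel
isomorphic to `ℤ` and cokernel `ℤ² / image(g) ≅ ℤ/4` as `ℤ`-modules. -/
theorem gysin_map_H4 :
    let g : (Fin 3 → ℤ) →ₗ[ℤ] (Fin 2 → ℤ) := Matrix.toLin' !![1, 1, -3; -1, -1, -1]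
    Nonempty ((LinearMap.ker g) ≃ₗ[ℤ] ℤ) ∧
      Nonempty (((Fin 2 → ℤ) ⧸ LinearMap.range g) ≃ₗ[ℤ] ZMod 4) := by
  intro g
  have hg : ∀ v : Fin 3 → ℤ, g v = ![v 0 + v 1 - 3 * v 2, -v 0 - v 1 - v 2] := by
    intro v
    funext i
    fin_cases i <;>
      simp [g, Matrix.toLin'_apply, Matrix.mulVec, dotProduct,
        Fin.sum_univ_three] <;> ring
  constructor
  · -- kernel ≅ ℤ
    let φ : LinearMap.ker g →ₗ[ℤ] ℤ :=
      (LinearMap.proj 0).comp (LinearMap.ker g).subtype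
    refine ⟨LinearEquiv.ofBijective φ ⟨?_, ?_⟩⟩
    · rintro ⟨v, hv⟩ ⟨w, hw⟩ h
      have hv' := (LinearMap.mem_ker.mp hv)
      have hw' := (LinearMap.mem_ker.mp hw)
      rw [hg] at hv' hw'
      have hv0 := congrFun hv' 0
      have hv1 := congrFun hv' 1
      have hw0 := congrFun hw' 0
      have hw1 := congrFun hw' 1
      simp at hv0 hv1 hw0 hw1
      have h0 : v 0 = w 0 := h
      ext i
      fin_cases i <;> simp <;> omega
    · intro t
      refine ⟨⟨![t, -t, 0], ?_⟩, rfl⟩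
      rw [LinearMap.mem_ker, hg]
      funext i
      fin_cases i <;> simp
  · -- cokernel ≅ ZMod 4
    let φ : (Fin 2 → ℤ) →ₗ[ℤ] ZMod 4 :=
      { toFun := fun v => ((v 0 + v 1 : ℤ) : ZMod 4)
        map_add' := by intro v w; simp only [Pi.add_apply]; push_cast; ring
        map_smul' := by
          intro c v; simp only [Pi.smul_apply, smul_eq_mul, RingHom.id_apply]
          rw [zsmul_eq_mul]; push_cast; ring }
    have hsurj : Function.Surjective φ := by
      intro z
      obtain ⟨x, hx⟩ := ZMod.intCast_surjective (n := 4) z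
      exact ⟨![x, 0], by simpa [φ] using hx⟩
    have hker : LinearMap.range g = LinearMap.ker φ := by
      ext v
      constructor
      · rintro ⟨u, rfl⟩
        rw [hg]
        simp only [LinearMap.mem_ker]
        show (((u 0 + u 1 - 3 * u 2 : ℤ) + (-u 0 - u 1 - u 2) : ℤ) : ZMod 4) = 0
        have : (u 0 + u 1 - 3 * u 2 : ℤ) + (-u 0 - u 1 - u 2) = 4 * (-u 2) := by ring
        rw [this]
        push_cast
        simp [show (4 : ZMod 4) = 0 from rfl]
      · intro hv
        have : ((v 0 + v 1 : ℤ) : ZMod 4) = 0 := hv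
        rw [ZMod.intCast_zmod_eq_zero_iff_dvd] at this
        obtain ⟨k, hk⟩ := this
        refine ⟨![v 0 + 3 * (-k), 0, -k], ?_⟩
        rw [hg]
        funext i
        fin_cases i <;> simp <;> omega
    exact ⟨(Submodule.quotEquivOfEq _ _ hker).trans
      (φ.quotKerEquivOfSurjective hsurj)⟩
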